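/- Let h: (a, ∞) → ℝ be defined by h(b) = b²/(cb − B) with c, B > 0 and a = B/c. Then for any b₁, b₂ ∈ (a, ∞) with b₁ < b₂ ≤ 2B/c, h(b₁) > h(b₂), i.e., h is strictly decreasing on (B/c, 2B/c]. -/
import Mathlib

theorem stmt16 (c B : ℝ) (hc : 0 < c) (hB : 0 < B)
    (h : ℝ → ℝ) (hh : ∀ b, h b = b ^ 2 / (c * b - B)) :
    ∀ b₁ b₂ : ℝ, B / c < b₁ → b₁ < b₂ → b₂ ≤ 2 * B / c → h b₂ < h b₁ := by
  intro b₁ b₂ h1 h12 h2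
  have d1 : 0 < c * b₁ - B := by
    have := (div_lt_iff₀ hc).mp h1; linarith [mul_comm b₁ c]
  have d2 : 0 < c * b₂ - B := by nlinarith
  have hb2 : c * b₂ ≤ 2 * B := by
    have := (le_div_iff₀ hc).mp h2; linarith [mul_comm b₂ c]
  have hb1pos : 0 < b₁ := lt_trans (div_pos hB hc) h1
  have key : 0 < B * (b₁ + b₂) - c * b₁ * b₂ := by
    nlinarith [mul_lt_mul_of_pos_right h12 d2]
  rw [hh, hh, div_lt_div_iff₀ d2 d1]
  nlinarith [mul_pos (sub_pos.mpr h12) key]
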